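/- arXiv:2406.19010 — 2 statements merged into one kernel-verified Lean document; each statement's English description precedes it below -/
import Mathlib

section
/- Let $(t_k)_{k \ge 0}$ be a sequence in $(0,1]$ and $(\rho_k)$ a sequence of nonnegative reals such that $\sum_{k=0}^\infty t_k \rho_k < \infty$, and suppose there are constants $c > 0$, $\gamma > 0$ with $\rho_k \le c\, t_k^\gamma$ whenever $t_k < 1$. Then $\rho_k \to 0$ as $k \to \infty$. -/
/-- Abstract core of the convergence theorem: if `∑ t_k ρ_k < ∞` and `ρ_k ≤ c t_k^γ`
whenever `t_k < 1`, then `ρ_k → 0`. -/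
theorem stmt10
    (t ρ : ℕ → ℝ) (ht : ∀ k, t k ∈ Set.Ioc (0 : ℝ) 1) (hρ : ∀ k, 0 ≤ ρ k)
    (hsum : Summable (fun k => t k * ρ k))
    (c γ : ℝ) (hc : 0 < c) (hγ : 0 < γ)
    (hbound : ∀ k, t k < 1 → ρ k ≤ c * t k ^ γ) :
    Filter.Tendsto ρ Filter.atTop (nhds 0) := by
  have h0 : Filter.Tendsto (fun k => t k * ρ k) Filter.atTop (nhds 0) :=
    hsum.tendsto_atTop_zero
  rw [Metric.tendsto_atTop]
  intro ε hε
  set δ : ℝ := min ε (ε * (ε / c) ^ (1/γ)) with hδdef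
  have hεc : (0:ℝ) < ε / c := div_pos hε hc
  have hδpos : 0 < δ := lt_min hε (mul_pos hε (Real.rpow_pos_of_pos hεc _))
  rw [Metric.tendsto_atTop] at h0
  obtain ⟨N, hN⟩ := h0 δ hδpos
  refine ⟨N, fun n hn => ?_⟩
  have hterm : t n * ρ n < δ := by
    have := hN n hn
    rwa [Real.dist_eq, sub_zero, abs_of_nonneg (mul_nonneg (ht n).1.le (hρ n))] at this
  rw [Real.dist_eq, sub_zero, abs_of_nonneg (hρ n)]
  by_contra hcon
  push_neg at hcon
  rcases lt_or_eq_of_le (ht n).2 with h1 | h1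
  · -- t n < 1
    have hb := hbound n h1
    have htγ : ε / c ≤ t n ^ γ := by
      rw [div_le_iff₀ hc] at *
      nlinarith [hcon, hb]
    have htn : (ε / c) ^ (1/γ) ≤ t n := by
      have := Real.rpow_le_rpow hεc.le htγ (by positivity : (0:ℝ) ≤ 1/γ)
      rwa [← Real.rpow_mul (ht n).1.le, mul_one_div,
        div_self hγ.ne', Real.rpow_one] at this
    have : ε * (ε / c) ^ (1/γ) ≤ t n * ρ n := by
      have h2 : (0:ℝ) ≤ (ε / c) ^ (1/γ) := (Real.rpow_pos_of_pos hεc _).le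
      calc ε * (ε / c) ^ (1/γ) = (ε / c) ^ (1/γ) * ε := by ring
        _ ≤ t n * ρ n := mul_le_mul htn hcon hε.le (ht n).1.le
    exact absurd (lt_of_le_of_lt this hterm) (not_lt.mpr (min_le_right _ _))
  · have : ε ≤ t n * ρ n := by rw [h1, one_mul]; exact hcon
    exact absurd (lt_of_le_of_lt this hterm) (not_lt.mpr (min_le_left _ _))
end

section
/- Let $(J_k)$ be a real sequence bounded below, $(\rho_k)$ nonnegative reals, $(t_k) \subset (0,1]$, $\sigma \in (0,1)$, and suppose $J_{k+1} - J_k \le \sigma\, t_k\, (-\rho_k)$ for all $k$ as well as $\rho_k \le c t_k^{\gamma}$ whenever $t_k < 1$, for constants $c, \gamma > 0$. Then $\sum_{k : t_k = 1} \rho_k < \infty$ and $\sum_{k : t_k < 1} \rho_k^{1 + 1/\gamma} < \infty$, hence $\rho_k \to 0$. -/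
/-- Quantitative form of the convergence theorem for Algorithm 1: the Armijo descent
inequality together with the step-size lower bound gives `∑_{t_k = 1} ρ_k < ∞` and
`∑_{t_k < 1} ρ_k^{1+1/γ} < ∞`, hence `ρ_k → 0`. -/
theorem stmt18
    (J : ℕ → ℝ) (M : ℝ) (hM : ∀ k, M ≤ J k)
    (ρ : ℕ → ℝ) (hρ : ∀ k, 0 ≤ ρ k)
    (t : ℕ → ℝ) (ht : ∀ k, t k ∈ Set.Ioc (0 : ℝ) 1)
    (σ : ℝ) (hσ : σ ∈ Set.Ioo (0 : ℝ) 1)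
    (hdesc : ∀ k, J (k + 1) - J k ≤ σ * t k * (-ρ k))
    (c γ : ℝ) (hc : 0 < c) (hγ : 0 < γ)
    (hbound : ∀ k, t k < 1 → ρ k ≤ c * t k ^ γ) :
    Summable (fun k => Set.indicator {k | t k = 1} ρ k) ∧
    Summable (fun k => Set.indicator {k | t k < 1} (fun k => ρ k ^ (1 + 1/γ)) k) ∧
    Filter.Tendsto ρ Filter.atTop (nhds 0) := by
  obtain ⟨hσ0, hσ1⟩ := hσ
  set a : ℕ → ℝ := fun k => t k * ρ k with ha
  have ha0 : ∀ k, 0 ≤ a k := fun k => mul_nonneg (ht k).1.le (hρ k)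
  -- summability of a
  have hsum_a : Summable a := by
    apply summable_of_sum_range_le (c := (J 0 - M) / σ) ha0
    intro n
    rw [le_div_iff₀ hσ0]
    have h1 : ∀ k, σ * a k ≤ J k - J (k + 1) := by
      intro k
      have := hdesc k
      simp only [ha]
      nlinarith
    calc (∑ i ∈ Finset.range n, a i) * σ = ∑ i ∈ Finset.range n, σ * a i := by
          rw [Finset.sum_mul]; exact Finset.sum_congr rfl (fun i _ => mul_comm _ _)
      _ ≤ ∑ i ∈ Finset.range n, (J i - J (i + 1)) := Finset.sum_le_sum (fun i _ => h1 i)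
      _ = J 0 - J n := Finset.sum_range_sub' J n
      _ ≤ J 0 - M := by linarith [hM n]
  -- key bound when t k < 1
  have hkey : ∀ k, t k < 1 → ρ k ^ (1 + 1/γ) ≤ c ^ (1/γ) * a k := by
    intro k h
    have ht0 := (ht k).1
    have h1 : ρ k ^ (1/γ) ≤ c ^ (1/γ) * t k := by
      calc ρ k ^ (1/γ) ≤ (c * t k ^ γ) ^ (1/γ) :=
            Real.rpow_le_rpow (hρ k) (hbound k h) (by positivity)
        _ = c ^ (1/γ) * (t k ^ γ) ^ (1/γ) :=
            Real.mul_rpow hc.le (Real.rpow_nonneg ht0.le _)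
        _ = c ^ (1/γ) * t k := by
            rw [← Real.rpow_mul ht0.le, mul_one_div_cancel hγ.ne', Real.rpow_one]
    have h2 : ρ k ^ (1 + 1/γ) = ρ k * ρ k ^ (1/γ) := by
      rw [Real.rpow_add' (hρ k) (by positivity), Real.rpow_one]
    rw [h2]
    calc ρ k * ρ k ^ (1/γ) ≤ ρ k * (c ^ (1/γ) * t k) :=
          mul_le_mul_of_nonneg_left h1 (hρ k)
      _ = c ^ (1/γ) * a k := by simp only [ha]; ring
  refine ⟨?_, ?_, ?_⟩
  · apply hsum_a.of_nonneg_of_le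
    · intro k; exact Set.indicator_nonneg (fun i _ => hρ i) k
    · intro k
      by_cases h : t k = 1
      · rw [Set.indicator_of_mem (by exact h)]
        simp only [ha, h, one_mul]
        exact le_rfl
      · rw [Set.indicator_of_notMem (by exact h)]
        exact ha0 k
  · apply (hsum_a.mul_left (c ^ (1/γ))).of_nonneg_of_le
    · intro k
      exact Set.indicator_nonneg (fun i _ => Real.rpow_nonneg (hρ i) _) k
    · intro k
      by_cases h : t k < 1
      · rw [Set.indicator_of_mem (by exact h)]
        exact hkey k h
      · rw [Set.indicator_of_notMem (by exact h)]
        exact mul_nonneg (by positivity) (ha0 k)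
  · -- squeeze
    have hta : Filter.Tendsto a Filter.atTop (nhds 0) := hsum_a.tendsto_atTop_zero
    have hq : (0:ℝ) < γ / (γ + 1) := by positivity
    have hb : Filter.Tendsto (fun k => a k + (c ^ (1/γ) * a k) ^ (γ/(γ+1)))
        Filter.atTop (nhds 0) := by
      have h1 : Filter.Tendsto (fun k => c ^ (1/γ) * a k) Filter.atTop (nhds 0) := by
        simpa using hta.const_mul (c ^ (1/γ))
      have h2 : Filter.Tendsto (fun k => (c ^ (1/γ) * a k) ^ (γ/(γ+1)))
          Filter.atTop (nhds 0) := by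
        have := h1.rpow_const (p := γ/(γ+1)) (Or.inr hq.le)
        simpa [Real.zero_rpow hq.ne'] using this
      simpa using hta.add h2
    apply tendsto_of_tendsto_of_tendsto_of_le_of_le tendsto_const_nhds hb hρ
    intro k
    rcases eq_or_lt_of_le (ht k).2 with h | h
    · have : ρ k = a k := by simp only [ha]; rw [h, one_mul]
      rw [this]
      have : 0 ≤ (c ^ (1/γ) * a k) ^ (γ/(γ+1)) :=
        Real.rpow_nonneg (mul_nonneg (by positivity) (ha0 k)) _
      linarith
    · have hk := hkey k h
      have hρp : 0 ≤ ρ k ^ (1 + 1/γ) := Real.rpow_nonneg (hρ k) _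
      have h3 : (ρ k ^ (1 + 1/γ)) ^ (γ/(γ+1)) ≤ (c ^ (1/γ) * a k) ^ (γ/(γ+1)) :=
        Real.rpow_le_rpow hρp hk hq.le
      have h4 : (ρ k ^ (1 + 1/γ)) ^ (γ/(γ+1)) = ρ k := by
        rw [← Real.rpow_mul (hρ k)]
        have : (1 + 1/γ) * (γ/(γ+1)) = 1 := by field_simp
        rw [this, Real.rpow_one]
      rw [h4] at h3
      linarith [ha0 k]
end
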